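/- Let G = ∩_{i=1}^J {x : ⟨x, n_i⟩ ≥ 0} for linearly independent unit vectors n_i, let d₁,…,d_J satisfy ⟨d_i, n_i⟩ = 1, and let ñ_j be the dual basis to the n_j. Fix i, K > 0, ε ∈ (0, K/2), T > 0, and x ∈ G with |x| ≤ K and ⟨x, n_j⟩ ≥ ε for all j. Define v_i := −ñ_i + ∑_{j≠i} (⟨d_i, n_j⟩)⁻ ñ_j, r̄₁ := 2(K+ε)/T, r̄₂ := 4ε/T, and for t ∈ [0,T]: f(t) := x + r̄₁ v_i (t ∧ T/2) + r̄₂ u (t − T/2)⁺ where u := ∑_j ñ_j, g(t) := (⟨x, n_i⟩ − r̄₁(t ∧ T/2))⁻ d_i, and h(t) := f(t) + g(t). Then for all t ∈ [0,T]: (a) ⟨h(t), n_i⟩ ≥ r̄₂ (t − T/2)⁺ ≥ 0; (b) ⟨h(t), n_j⟩ ≥ ε for all j ≠ i; (c) ⟨h(T), n_j⟩ ≥ 2ε for all j; and (d) |g(T)| ≥ ε. -/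

import Mathlib

/-- Lemma 6.3: the explicit deterministic path `h = f + g` started at `x` stays in the cone,
touches only the face `Fᵢ` on `[0, T]` (quantitatively: `⟨h(t), n_j⟩ ≥ ε` for `j ≠ i` and
`⟨h(t), nᵢ⟩ ≥ r̄₂ (t - T/2)⁺ ≥ 0`), ends at distance at least `2ε` from every face, and the
constraining term satisfies `|g(T)| ≥ ε`. Here `a⁻ = max(-a,0)` and `a⁺ = max(a,0)`. -/
theorem explicit_path_hits_one_face {J : ℕ}
    (n d ntil : Fin J → EuclideanSpace ℝ (Fin J))
    (hind : LinearIndependent ℝ n) (hunit : ∀ j, ‖n j‖ = 1)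
    (hd : ∀ j, (inner ℝ (d j) (n j) : ℝ) = 1)
    (hdual : ∀ j, (inner ℝ (ntil j) (n j) : ℝ) = 1)
    (hdual' : ∀ j k, k ≠ j → (inner ℝ (ntil j) (n k) : ℝ) = 0)
    (i : Fin J) (K ε T : ℝ) (hK : 0 < K) (hε : 0 < ε) (hεK : ε < K / 2) (hT : 0 < T)
    (x : EuclideanSpace ℝ (Fin J))
    (hxG : ∀ j, 0 ≤ (inner ℝ x (n j) : ℝ)) (hxK : ‖x‖ ≤ K)
    (hxε : ∀ j, ε ≤ (inner ℝ x (n j) : ℝ)) :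
    let v : EuclideanSpace ℝ (Fin J) :=
      -ntil i + ∑ j ∈ Finset.univ.erase i, max (-(inner ℝ (d i) (n j) : ℝ)) 0 • ntil j
    let r1 : ℝ := 2 * (K + ε) / T
    let r2 : ℝ := 4 * ε / T
    let u : EuclideanSpace ℝ (Fin J) := ∑ j, ntil j
    let f : ℝ → EuclideanSpace ℝ (Fin J) := fun t =>
      x + (r1 * min t (T / 2)) • v + (r2 * max (t - T / 2) 0) • u
    let g : ℝ → EuclideanSpace ℝ (Fin J) := fun t =>
      max (-((inner ℝ x (n i) : ℝ) - r1 * min t (T / 2))) 0 • d i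
    let h : ℝ → EuclideanSpace ℝ (Fin J) := fun t => f t + g t
    (∀ t ∈ Set.Icc (0 : ℝ) T,
        (r2 * max (t - T / 2) 0 ≤ (inner ℝ (h t) (n i) : ℝ) ∧ 0 ≤ r2 * max (t - T / 2) 0) ∧
        ∀ j, j ≠ i → ε ≤ (inner ℝ (h t) (n j) : ℝ)) ∧
      (∀ j, 2 * ε ≤ (inner ℝ (h T) (n j) : ℝ)) ∧
      ε ≤ ‖g T‖ := by
  intro v r1 r2 u f g h
  have hr1 : 0 < r1 := by
    have : 0 < K + ε := by linarith
    exact div_pos (by linarith) hT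
  have hr2 : 0 < r2 := div_pos (by linarith) hT
  -- inner products of u and v with the n j
  have hu : ∀ j, (inner ℝ u (n j) : ℝ) = 1 := by
    intro j
    simp only [u, sum_inner]
    rw [Finset.sum_eq_single j (fun k _ hk => hdual' k j hk.symm)
      (fun hj => absurd (Finset.mem_univ j) hj)]
    exact hdual j
  have hvi : (inner ℝ v (n i) : ℝ) = -1 := by
    simp only [v, inner_add_left, inner_neg_left, hdual i, sum_inner, real_inner_smul_left]
    rw [Finset.sum_eq_zero]
    · ring
    · intro k hk
      rw [hdual' k i (Finset.ne_of_mem_erase hk).symm, mul_zero]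
  have hvj : ∀ j, j ≠ i → (inner ℝ v (n j) : ℝ) = max (-(inner ℝ (d i) (n j) : ℝ)) 0 := by
    intro j hj
    simp only [v, inner_add_left, inner_neg_left, hdual' i j hj, sum_inner,
      real_inner_smul_left]
    rw [Finset.sum_eq_single_of_mem j (Finset.mem_erase.2 ⟨hj, Finset.mem_univ j⟩)
      (fun k _ hk => by rw [hdual' k j hk.symm, mul_zero])]
    rw [hdual j]
    ring
  -- expansion of inner ℝ (h t) (n j)
  have key : ∀ t j, (inner ℝ (h t) (n j) : ℝ) =
      (inner ℝ x (n j) : ℝ) + (r1 * min t (T / 2)) * (inner ℝ v (n j) : ℝ)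
        + (r2 * max (t - T / 2) 0) * 1
        + max (-((inner ℝ x (n i) : ℝ) - r1 * min t (T / 2))) 0 * (inner ℝ (d i) (n j) : ℝ) := by
    intro t j
    simp only [h, f, g, inner_add_left, real_inner_smul_left, hu j]
  have main : ∀ t ∈ Set.Icc (0 : ℝ) T,
      (r2 * max (t - T / 2) 0 ≤ (inner ℝ (h t) (n i) : ℝ)) ∧
      (0 ≤ r2 * max (t - T / 2) 0) ∧
      ∀ j, j ≠ i → ε + r2 * max (t - T / 2) 0 ≤ (inner ℝ (h t) (n j) : ℝ) := by
    intro t ht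
    obtain ⟨ht0, htT⟩ := ht
    set s : ℝ := min t (T / 2) with hs
    set p : ℝ := max (t - T / 2) 0 with hp
    have hs0 : 0 ≤ s := le_min ht0 (by linarith)
    have hp0 : 0 ≤ p := le_max_right _ _
    have hrp : 0 ≤ r2 * p := mul_nonneg hr2.le hp0
    set a : ℝ := (inner ℝ x (n i) : ℝ) with ha
    set m : ℝ := max (-(a - r1 * s)) 0 with hm
    have hm0 : 0 ≤ m := le_max_right _ _
    have hm1 : -(a - r1 * s) ≤ m := le_max_left _ _
    have hmle : m ≤ r1 * s := by
      have := hxG i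
      have hrs : 0 ≤ r1 * s := mul_nonneg hr1.le hs0
      exact max_le (by linarith) hrs
    refine ⟨?_, hrp, ?_⟩
    · rw [key t i, hvi, hd i]
      linarith
    · intro j hj
      rw [key t j, hvj j hj]
      set c : ℝ := (inner ℝ (d i) (n j) : ℝ) with hc
      have hM1 : -c ≤ max (-c) 0 := le_max_left _ _
      have hM0 : 0 ≤ max (-c) 0 := le_max_right _ _
      have h1 : 0 ≤ (r1 * s - m) * max (-c) 0 := mul_nonneg (by linarith) hM0
      have h2 : 0 ≤ m * (c + max (-c) 0) := mul_nonneg hm0 (by linarith)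
      have := hxε j
      nlinarith
  have hTmem : T ∈ Set.Icc (0 : ℝ) T := ⟨hT.le, le_refl T⟩
  have hsT : min T (T / 2) = T / 2 := min_eq_right (by linarith)
  have hpT : max (T - T / 2) 0 = T / 2 := by rw [max_eq_left (by linarith)]; ring
  have hr2T : r2 * (T / 2) = 2 * ε := by
    field_simp [r2]
    simp only [r2]; rw [div_mul_cancel₀ _ hT.ne']; ring
  refine ⟨fun t ht => ⟨⟨(main t ht).1, (main t ht).2.1⟩,
      fun j hj => le_trans (by linarith [(main t ht).2.1]) ((main t ht).2.2 j hj)⟩, ?_, ?_⟩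
  · intro j
    obtain ⟨h1, _, h3⟩ := main T hTmem
    by_cases hj : j = i
    · subst hj
      rw [hpT, hr2T] at h1
      exact h1
    · have := h3 j hj
      rw [hpT, hr2T] at this
      linarith
  · -- ‖g T‖ ≥ ε
    have haK : (inner ℝ x (n i) : ℝ) ≤ K := by
      calc (inner ℝ x (n i) : ℝ) ≤ ‖x‖ * ‖n i‖ := real_inner_le_norm x (n i)
        _ = ‖x‖ := by rw [hunit i, mul_one]
        _ ≤ K := hxK
    have hr1T : r1 * (T / 2) = K + ε := by
      field_simp [r1]
      simp only [r1]; rw [div_mul_cancel₀ _ hT.ne']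
    have hmT : ε ≤ max (-((inner ℝ x (n i) : ℝ) - r1 * min T (T / 2))) 0 := by
      rw [hsT, hr1T]
      exact le_max_of_le_left (by linarith)
    have hdi : 1 ≤ ‖d i‖ := by
      calc (1 : ℝ) = (inner ℝ (d i) (n i) : ℝ) := (hd i).symm
        _ ≤ ‖d i‖ * ‖n i‖ := real_inner_le_norm _ _
        _ = ‖d i‖ := by rw [hunit i, mul_one]
    have : ‖g T‖ = max (-((inner ℝ x (n i) : ℝ) - r1 * min T (T / 2))) 0 * ‖d i‖ := by
      simp only [g, norm_smul, Real.norm_eq_abs]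
      rw [abs_of_nonneg (le_max_right _ _)]
    rw [this]
    calc ε = ε * 1 := (mul_one ε).symm
      _ ≤ max (-((inner ℝ x (n i) : ℝ) - r1 * min T (T / 2))) 0 * ‖d i‖ :=
        mul_le_mul hmT hdi zero_le_one (le_trans hε.le hmT)
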